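/- (Lemma 5, second estimate, concrete form) Suppose all partial derivatives D^{(α,β)}κ = ∂^{α+β}κ/∂s^α∂t^β with 0 ≤ α+β ≤ 2r+3 exist, are continuous on [0,1]×[0,1], and satisfy |D^{(α,β)}κ(s,t)| ≤ C₂. Then there exists a constant C > 0, independent of n, such that for every continuous ψ : [0,1] → ℝ, writing x := Kψ and z := K(x − Q_n x), one has ‖K(z − Q_n z)‖_∞ ≤ C ‖ψ‖_∞ h^{4r+4}. -/

import Mathlib

/-!
On a subinterval `[a, a + h]` write `W = q + R`, with `q` the Taylor polynomial of degree `2r + 1`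
and `R = O(h ^ (2r + 2))`. Interpolation at the `2r + 1` nodes is stable and maps `q` to `q - c Φ`,
where `Φ` is the nodal polynomial and `c` the top Taylor coefficient, so the interpolation error of
`W` is `O(h ^ (2r + 2))` plus `c Φ`. The nodes are symmetric and odd in number, so `Φ` is odd about
the midpoint and has mean zero; against a Lipschitz weight `g` it therefore contributes only
`O(h ^ (2r + 3))`. Summing over the `n` subintervals, `∫₀¹ g (W - Qₙ W) = O(h ^ (2r + 2))`
whenever `W` has `2r + 2` bounded derivatives.

The derivatives `∫₀¹ ∂ₛᵏκ(s, t) (x - Qₙ x)(t) dt` of `z = K(x - Qₙ x)` are `O(h ^ (2r + 2))` by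
this estimate applied to `W = x`; applying it once more, to `W = z`, gives `h ^ (4r + 4)`.
-/

open Set MeasureTheory

/-- Equidistant interpolation nodes: `τ_j^i = t_{j-1} + i·h/(2r)` with `h = 1/n`. -/
noncomputable def tau (n r j i : ℕ) : ℝ :=
  ((j : ℝ) - 1) / n + (i : ℝ) / (2 * r * n)

/-- The unique polynomial of degree ≤ 2r interpolating `x` at the nodes of `Δ_j`. -/
noncomputable def interpPoly (n r j : ℕ) (x : ℝ → ℝ) : Polynomial ℝ :=
  Lagrange.interpolate (Finset.range (2 * r + 1)) (tau n r j) (fun i => x (tau n r j i))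

/-- The interpolatory projection `Q_n x`: on each subinterval `Δ_j = [(j-1)/n, j/n]` it
coincides with the polynomial of degree ≤ 2r interpolating `x` at the nodes `τ_j^i`.
(At a partition point both adjacent pieces take the value `x(t_j)`.) -/
noncomputable def Qn (n r : ℕ) (x : ℝ → ℝ) (t : ℝ) : ℝ :=
  (interpPoly n r (min n (⌊t * (n : ℝ)⌋₊ + 1)) x).eval t

/-- The Fredholm integral operator with kernel `κ`. -/
noncomputable def Kop (κ : ℝ → ℝ → ℝ) (x : ℝ → ℝ) (s : ℝ) : ℝ :=
  ∫ t in (0:ℝ)..1, κ s t * x t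

/-- Supremum norm on `[0,1]`. -/
noncomputable def supNorm (f : ℝ → ℝ) : ℝ :=
  ⨆ t : Set.Icc (0:ℝ) 1, |f t.1|

/-- The nodal polynomial `Φ_j(t) = ∏_{i=0}^{2r} (t − τ_j^i)`. -/
noncomputable def Phi (n r j : ℕ) (t : ℝ) : ℝ :=
  ∏ i ∈ Finset.range (2 * r + 1), (t - tau n r j i)

/-- `‖x‖_{k,∞} = max_{0 ≤ i ≤ k} ‖x^{(i)}‖_∞` (derivatives taken within `[0,1]`). -/
noncomputable def cknorm (k : ℕ) (x : ℝ → ℝ) : ℝ :=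
  ⨆ i : Fin (k + 1), supNorm (iteratedDerivWithin i x (Set.Icc 0 1))

open Polynomial
open scoped Nat

lemma abs_sub_le_of_mem_Icc {a h x y : ℝ} (hx : x ∈ Icc a (a + h)) (hy : y ∈ Icc a (a + h)) :
    |x - y| ≤ h := by
  simpa [Real.dist_eq] using Real.dist_le_of_mem_Icc hx hy

lemma abs_intervalIntegral_le_of_forall_mem_Icc {f : ℝ → ℝ} {a b C : ℝ} (hab : a ≤ b)
    (hf : ∀ t ∈ Icc a b, |f t| ≤ C) : |∫ t in a..b, f t| ≤ C * (b - a) := by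
  simpa [abs_of_nonneg (sub_nonneg.mpr hab)] using
    intervalIntegral.norm_integral_le_of_norm_le_const (f := f) fun t ht =>
      hf t (Ioc_subset_Icc_self (uIoc_of_le hab ▸ ht))

lemma Lagrange.interpolate_eval_eq_sub_coeff_mul_nodal {F ι : Type*} [Field F] [DecidableEq ι]
    {s : Finset ι} {v : ι → F} (hvs : Set.InjOn v s) {q : F[X]} (hq : q.natDegree ≤ s.card) :
    Lagrange.interpolate s v (fun i => q.eval (v i))
      = q - C (q.coeff s.card) * Lagrange.nodal s v := by
  have hdeg : (q - C (q.coeff s.card) * Lagrange.nodal s v).degree < s.card := by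
    rw [degree_lt_iff_coeff_zero]
    intro k hk
    rw [coeff_sub, coeff_C_mul]
    rcases hk.eq_or_lt with rfl | hlt
    · rw [← Lagrange.natDegree_nodal (v := v), Lagrange.nodal_monic.coeff_natDegree, mul_one,
        sub_self]
    · rw [coeff_eq_zero_of_natDegree_lt (hq.trans_lt hlt), coeff_eq_zero_of_natDegree_lt
        (p := Lagrange.nodal s v) (by rwa [Lagrange.natDegree_nodal]), mul_zero, sub_self]
  refine (Lagrange.eq_interpolate_of_eval_eq _ hvs hdeg fun i hi => ?_).symm
  rw [eval_sub, eval_mul, Lagrange.eval_nodal_at_node hi, mul_zero, sub_zero]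

noncomputable def equiNode (a h : ℝ) (m i : ℕ) : ℝ :=
  a + i * h / m

noncomputable def interpEqui (a h : ℝ) (m : ℕ) (f : ℝ → ℝ) : ℝ[X] :=
  Lagrange.interpolate (Finset.range (m + 1)) (equiNode a h m) (fun i => f (equiNode a h m i))

noncomputable abbrev nodalEqui (a h : ℝ) (m : ℕ) : ℝ[X] :=
  Lagrange.nodal (Finset.range (m + 1)) (equiNode a h m)

/-- An upper bound for the Lebesgue constant of interpolation at `m + 1` equispaced nodes: each
Lagrange basis polynomial is at most `m ^ m` in absolute value on the interval. -/
def lebesgueConst (m : ℕ) : ℝ :=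
  (m + 1) * m ^ m

lemma lebesgueConst_nonneg (m : ℕ) : 0 ≤ lebesgueConst m := by
  unfold lebesgueConst; positivity

section EquiNode

variable {a h : ℝ} {m : ℕ}

lemma equiNode_sub_equiNode (i k : ℕ) :
    equiNode a h m i - equiNode a h m k = ((i : ℝ) - k) * h / m := by
  simp only [equiNode]; ring

lemma equiNode_mem_Icc (hh : 0 ≤ h) (hm : 0 < m) {i : ℕ} (hi : i ≤ m) :
    equiNode a h m i ∈ Icc a (a + h) := by
  have hm' : (0 : ℝ) < m := by exact_mod_cast hm
  have : (i : ℝ) * h / m ≤ h := by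
    rw [div_le_iff₀ hm', mul_comm h]
    exact mul_le_mul_of_nonneg_right (by exact_mod_cast hi) hh
  exact ⟨le_add_of_nonneg_right (by positivity), by simp only [equiNode]; linarith⟩

lemma div_le_abs_equiNode_sub (hh : 0 ≤ h) {i k : ℕ} (hik : i ≠ k) :
    h / m ≤ |equiNode a h m i - equiNode a h m k| := by
  have hik' : (1 : ℝ) ≤ |(i : ℝ) - k| := by
    rcases Nat.lt_or_gt_of_ne hik with hlt | hlt
    · have : (i : ℝ) + 1 ≤ k := by exact_mod_cast hlt
      exact le_abs.mpr (Or.inr (by linarith))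
    · have : (k : ℝ) + 1 ≤ i := by exact_mod_cast hlt
      exact le_abs.mpr (Or.inl (by linarith))
  have hhm : 0 ≤ h / m := div_nonneg hh m.cast_nonneg
  rw [equiNode_sub_equiNode, mul_div_assoc, abs_mul, abs_of_nonneg hhm]
  exact le_mul_of_one_le_left hhm hik'

lemma equiNode_injective (hh : 0 < h) (hm : 0 < m) : Function.Injective (equiNode a h m) := by
  intro i k hik
  by_contra hne
  have := div_le_abs_equiNode_sub (a := a) (m := m) hh.le hne
  rw [hik, sub_self, abs_zero] at this
  have : 0 < h / m := div_pos hh (by exact_mod_cast hm)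
  linarith

lemma equiNode_reflect (hm : 0 < m) {i : ℕ} (hi : i ≤ m) :
    equiNode a h m (m - i) = 2 * a + h - equiNode a h m i := by
  have hm' : (m : ℝ) ≠ 0 := by exact_mod_cast hm.ne'
  simp only [equiNode, Nat.cast_sub hi]
  field_simp
  ring

end EquiNode

lemma tau_eq_equiNode (n r j i : ℕ) :
    tau n r j i = equiNode (((j : ℝ) - 1) / n) (1 / n) (2 * r) i := by
  simp only [tau, equiNode]; push_cast; ring

lemma interpPoly_eq_interpEqui (n r j : ℕ) (x : ℝ → ℝ) :
    interpPoly n r j x = interpEqui (((j : ℝ) - 1) / n) (1 / n) (2 * r) x := by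
  have : tau n r j = equiNode (((j : ℝ) - 1) / n) (1 / n) (2 * r) := funext (tau_eq_equiNode n r j)
  simp only [interpPoly, interpEqui, this]

section Interpolation

variable {a h : ℝ} {m : ℕ}

lemma abs_eval_basis_le (hh : 0 < h) (hm : 0 < m) {t : ℝ} (ht : t ∈ Icc a (a + h)) {i : ℕ}
    (hi : i ∈ Finset.range (m + 1)) :
    |(Lagrange.basis (Finset.range (m + 1)) (equiNode a h m) i).eval t| ≤ (m : ℝ) ^ m := by
  have hcard : ((Finset.range (m + 1)).erase i).card = m := by simp [Finset.card_erase_of_mem hi]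
  rw [Lagrange.basis, eval_prod, Finset.abs_prod]
  refine le_of_le_of_eq (Finset.prod_le_prod (g := fun _ => (m : ℝ)) (fun _ _ => abs_nonneg _)
    fun k hk => ?_) (by rw [Finset.prod_const, hcard])
  obtain ⟨hki, hk⟩ := Finset.mem_erase.mp hk
  have hgap := div_le_abs_equiNode_sub (a := a) (m := m) hh.le (Ne.symm hki)
  have hdist := abs_sub_le_of_mem_Icc ht
    (equiNode_mem_Icc hh.le hm (Nat.lt_succ_iff.mp (Finset.mem_range.mp hk)))
  simp only [Lagrange.basisDivisor, eval_mul, eval_C, eval_sub, eval_X, abs_mul, abs_inv]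
  have hhm : 0 < h / m := div_pos hh (by exact_mod_cast hm)
  calc |equiNode a h m i - equiNode a h m k|⁻¹ * |t - equiNode a h m k|
      ≤ (h / m)⁻¹ * h := mul_le_mul (inv_anti₀ hhm hgap) hdist (abs_nonneg _) (by positivity)
    _ = m := by field_simp

lemma abs_eval_interpEqui_le (hh : 0 < h) (hm : 0 < m) {t : ℝ} (ht : t ∈ Icc a (a + h))
    {f : ℝ → ℝ} {M : ℝ} (hf : ∀ u ∈ Icc a (a + h), |f u| ≤ M) :
    |(interpEqui a h m f).eval t| ≤ lebesgueConst m * M := by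
  have hM : 0 ≤ M := (abs_nonneg _).trans (hf a (left_mem_Icc.mpr (by linarith)))
  rw [interpEqui, Lagrange.interpolate_apply, eval_finsetSum]
  refine (Finset.abs_sum_le_sum_abs _ _).trans ?_
  calc ∑ i ∈ Finset.range (m + 1), |eval t (C (f (equiNode a h m i)) *
          Lagrange.basis (Finset.range (m + 1)) (equiNode a h m) i)|
      ≤ ∑ _i ∈ Finset.range (m + 1), M * (m : ℝ) ^ m := by
        refine Finset.sum_le_sum fun i hi => ?_
        rw [eval_mul, eval_C, abs_mul]
        have hnode := equiNode_mem_Icc (a := a) hh.le hm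
          (Nat.lt_succ_iff.mp (Finset.mem_range.mp hi))
        exact mul_le_mul (hf _ hnode) (abs_eval_basis_le hh hm ht hi) (abs_nonneg _) hM
    _ = lebesgueConst m * M := by simp [lebesgueConst]; ring

lemma interpEqui_add (f g : ℝ → ℝ) :
    interpEqui a h m (f + g) = interpEqui a h m f + interpEqui a h m g :=
  map_add (Lagrange.interpolate _ _) _ _

lemma interpEqui_eval_eq_sub_coeff_mul_nodalEqui (hh : 0 < h) (hm : 0 < m) {q : ℝ[X]}
    (hq : q.natDegree ≤ m + 1) :
    interpEqui a h m (fun t => q.eval t) = q - C (q.coeff (m + 1)) * nodalEqui a h m := by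
  have := Lagrange.interpolate_eval_eq_sub_coeff_mul_nodal (s := Finset.range (m + 1))
    (equiNode_injective (a := a) hh hm).injOn (q := q) (by rwa [Finset.card_range])
  rwa [Finset.card_range] at this

lemma abs_eval_nodalEqui_le (hh : 0 ≤ h) (hm : 0 < m) {t : ℝ} (ht : t ∈ Icc a (a + h)) :
    |(nodalEqui a h m).eval t| ≤ h ^ (m + 1) := by
  rw [Lagrange.eval_nodal, Finset.abs_prod]
  calc ∏ i ∈ Finset.range (m + 1), |t - equiNode a h m i| ≤ ∏ _i ∈ Finset.range (m + 1), h :=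
        Finset.prod_le_prod (fun _ _ => abs_nonneg _) fun i hi => abs_sub_le_of_mem_Icc ht
          (equiNode_mem_Icc hh hm (Nat.lt_succ_iff.mp (Finset.mem_range.mp hi)))
    _ = h ^ (m + 1) := by simp

lemma eval_nodalEqui_reflect (hm : 0 < m) (he : Even m) (t : ℝ) :
    (nodalEqui a h m).eval (2 * a + h - t) = -(nodalEqui a h m).eval t := by
  simp only [Lagrange.eval_nodal]
  calc ∏ i ∈ Finset.range (m + 1), (2 * a + h - t - equiNode a h m i)
      = ∏ i ∈ Finset.range (m + 1), (-1) * (t - equiNode a h m (m + 1 - 1 - i)) :=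
        Finset.prod_congr rfl fun i hi => by
          rw [Nat.add_sub_cancel, equiNode_reflect hm (Nat.lt_succ_iff.mp (Finset.mem_range.mp hi))]
          ring
    _ = -∏ i ∈ Finset.range (m + 1), (t - equiNode a h m i) := by
        rw [Finset.prod_mul_distrib, Finset.prod_const, Finset.card_range, he.add_one.neg_one_pow,
          Finset.prod_range_reflect (fun i => t - equiNode a h m i)]
        ring

lemma integral_eval_nodalEqui (hm : 0 < m) (he : Even m) :
    ∫ t in a..a + h, (nodalEqui a h m).eval t = 0 := by
  have h_refl := intervalIntegral.integral_comp_sub_left (fun t => (nodalEqui a h m).eval t)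
    (2 * a + h) (a := a) (b := a + h)
  simp only [eval_nodalEqui_reflect hm he, intervalIntegral.integral_neg] at h_refl
  rw [show 2 * a + h - (a + h) = a by ring, show 2 * a + h - a = a + h by ring] at h_refl
  linarith

lemma abs_integral_mul_eval_nodalEqui_le (hh : 0 ≤ h) (hm : 0 < m) (he : Even m) {g : ℝ → ℝ}
    {L : ℝ} (hgc : ContinuousOn g (Icc a (a + h))) (hg : ∀ t ∈ Icc a (a + h), |g t - g a| ≤ L * h) :
    |∫ t in a..a + h, g t * (nodalEqui a h m).eval t| ≤ L * h ^ (m + 3) := by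
  have hΦ : Continuous fun t => (nodalEqui a h m).eval t := Polynomial.continuous _
  have hint : IntervalIntegrable (fun t => g t * (nodalEqui a h m).eval t) volume a (a + h) :=
    (hgc.mul hΦ.continuousOn).intervalIntegrable_of_Icc (by linarith)
  have hshift : ∫ t in a..a + h, g t * (nodalEqui a h m).eval t
      = ∫ t in a..a + h, (g t - g a) * (nodalEqui a h m).eval t := by
    simp only [sub_mul]
    rw [intervalIntegral.integral_sub hint ((hΦ.intervalIntegrable _ _).const_mul (g a)),
      intervalIntegral.integral_const_mul, integral_eval_nodalEqui hm he, mul_zero, sub_zero]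
  rw [hshift]
  calc _ ≤ L * h * h ^ (m + 1) * (a + h - a) :=
        abs_intervalIntegral_le_of_forall_mem_Icc (by linarith) fun t ht => by
          rw [abs_mul]
          exact mul_le_mul (hg t ht) (abs_eval_nodalEqui_le hh hm ht) (abs_nonneg _)
            ((abs_nonneg _).trans (hg t ht))
    _ = L * h ^ (m + 3) := by ring

end Interpolation

noncomputable def chainTaylor (F : ℕ → ℝ → ℝ) (a : ℝ) (m : ℕ) : ℝ[X] :=
  ∑ k ∈ Finset.range m, C (F k a / k !) * (X - C a) ^ k

section ChainTaylor

variable (F : ℕ → ℝ → ℝ) (a : ℝ) (m : ℕ)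

lemma derivative_chainTaylor :
    derivative (chainTaylor F a (m + 1)) = chainTaylor (fun k => F (k + 1)) a m := by
  simp only [chainTaylor, derivative_sum, derivative_C_mul, derivative_X_sub_C_pow]
  rw [Finset.sum_range_succ']
  simp only [Nat.cast_zero, C_0, zero_mul, mul_zero, add_zero, Nat.add_sub_cancel]
  refine Finset.sum_congr rfl fun k _ => ?_
  rw [← mul_assoc, ← C_mul, Nat.factorial_succ]
  congr 2
  push_cast
  field_simp

lemma eval_chainTaylor_self : (chainTaylor F a (m + 1)).eval a = F 0 a := by
  simp [chainTaylor, eval_finsetSum, Finset.sum_range_succ']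

lemma natDegree_chainTaylor_le : (chainTaylor F a (m + 1)).natDegree ≤ m :=
  natDegree_sum_le_of_forall_le _ _ fun k hk =>
    (natDegree_C_mul_le _ _).trans <| (natDegree_pow_le_of_le k (natDegree_X_sub_C_le a)).trans <|
      by simpa [Nat.lt_succ_iff] using hk

lemma coeff_chainTaylor : (chainTaylor F a (m + 1)).coeff m = F m a / m ! := by
  have hlow : ∀ k ∈ Finset.range m, (C (F k a / k !) * (X - C a) ^ k).coeff m = 0 :=
    fun k hk => coeff_eq_zero_of_natDegree_lt <| (natDegree_C_mul_le _ _).trans_lt <|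
      (natDegree_pow_le_of_le k (natDegree_X_sub_C_le a)).trans_lt (by simpa using hk)
  have htop : ((X - C a) ^ m).coeff m = 1 := by
    simpa using ((monic_X_sub_C a).pow m).coeff_natDegree
  rw [chainTaylor, finsetSum_coeff, Finset.sum_range_succ, Finset.sum_eq_zero hlow, zero_add,
    coeff_C_mul, htop, mul_one]

lemma abs_coeff_chainTaylor_le {M : ℝ} (hM : |F m a| ≤ M) :
    |(chainTaylor F a (m + 1)).coeff m| ≤ M := by
  rw [coeff_chainTaylor, abs_div, Nat.abs_cast]
  exact div_le_of_le_mul₀ (by positivity) ((abs_nonneg _).trans hM) <|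
    hM.trans <| le_mul_of_one_le_right ((abs_nonneg _).trans hM) (mod_cast m.factorial_pos)

lemma abs_sub_eval_chainTaylor_le {F : ℕ → ℝ → ℝ} {a b M : ℝ} (m : ℕ)
    (hF : ∀ k < m, ∀ t ∈ Icc a b, HasDerivWithinAt (F k) (F (k + 1) t) (Icc a b) t)
    (hM : ∀ t ∈ Icc a b, |F m t| ≤ M) :
    ∀ t ∈ Icc a b, |F 0 t - (chainTaylor F a m).eval t| ≤ M * (t - a) ^ m / m ! := by
  induction m generalizing F with
  | zero => simpa [chainTaylor] using hM
  | succ m ih =>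
    have hG : ∀ t ∈ Icc a b, HasDerivWithinAt (fun t => F 0 t - (chainTaylor F a (m + 1)).eval t)
        (F 1 t - (chainTaylor (fun k => F (k + 1)) a m).eval t) (Icc a b) t := fun t ht => by
      have := (hF 0 m.succ_pos t ht).sub
        (Polynomial.hasDerivAt (chainTaylor F a (m + 1)) t).hasDerivWithinAt
      rwa [derivative_chainTaylor] at this
    have hB : ∀ t, HasDerivAt (fun t => M * (t - a) ^ (m + 1) / (m + 1)!)
        (M * (t - a) ^ m / m !) t := fun t => by
      refine ((((hasDerivAt_id t).sub_const a).pow (m + 1)).const_mul M).div_const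
        ((m + 1)! : ℝ) |>.congr_deriv ?_
      rw [Nat.factorial_succ]
      push_cast
      field_simp
      simp
    exact image_norm_le_of_norm_deriv_right_le_deriv_boundary
      (fun t ht => (hG t ht).continuousWithinAt)
      (fun t ht => (hG t (Ico_subset_Icc_self ht)).mono_of_mem_nhdsWithin
        (Icc_mem_nhdsGE_of_mem ht))
      (by simp [eval_chainTaylor_self]) hB
      fun t ht => ih (fun k hk => hF (k + 1) (by omega)) hM t (Ico_subset_Icc_self ht)

end ChainTaylor

section LocalEstimate

variable {a h : ℝ} {m : ℕ}

lemma sub_eval_interpEqui_eq (hh : 0 < h) (hm : 0 < m) (f : ℝ → ℝ) {q : ℝ[X]}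
    (hq : q.natDegree ≤ m + 1) (t : ℝ) :
    f t - (interpEqui a h m f).eval t
      = (f t - q.eval t) - (interpEqui a h m fun u => f u - q.eval u).eval t
        + q.coeff (m + 1) * (nodalEqui a h m).eval t := by
  have hsplit : interpEqui a h m f
      = interpEqui a h m (fun u => f u - q.eval u) + interpEqui a h m fun u => q.eval u := by
    rw [← interpEqui_add]
    congr 1
    ext u
    simp
  rw [hsplit, interpEqui_eval_eq_sub_coeff_mul_nodalEqui hh hm hq]
  simp only [eval_add, eval_sub, eval_mul, eval_C]
  ring

lemma abs_sub_eval_chainTaylor_le_pow {W : ℕ → ℝ → ℝ} {M : ℝ} (hM : 0 ≤ M) (k : ℕ)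
    (hW : ∀ i < k, ∀ t ∈ Icc a (a + h), HasDerivWithinAt (W i) (W (i + 1) t) (Icc a (a + h)) t)
    (hWk : ∀ t ∈ Icc a (a + h), |W k t| ≤ M) {t : ℝ} (ht : t ∈ Icc a (a + h)) :
    |W 0 t - (chainTaylor W a k).eval t| ≤ M * h ^ k := by
  have hta : 0 ≤ t - a := sub_nonneg.mpr ht.1
  calc |W 0 t - (chainTaylor W a k).eval t| ≤ M * (t - a) ^ k / k ! :=
        abs_sub_eval_chainTaylor_le k hW hWk t ht
    _ ≤ M * (t - a) ^ k := div_le_self (by positivity) (mod_cast k.factorial_pos)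
    _ ≤ M * h ^ k := by gcongr; linarith [ht.2]

lemma abs_integral_mul_sub_interpEqui_le (hh : 0 < h) (hm : 0 < m) (he : Even m) {g : ℝ → ℝ}
    {Cg L : ℝ} (hgc : ContinuousOn g (Icc a (a + h))) (hg : ∀ t ∈ Icc a (a + h), |g t| ≤ Cg)
    (hgL : ∀ t ∈ Icc a (a + h), |g t - g a| ≤ L * h) {W : ℕ → ℝ → ℝ} {M : ℝ}
    (hW : ∀ k < m + 2, ∀ t ∈ Icc a (a + h),
      HasDerivWithinAt (W k) (W (k + 1) t) (Icc a (a + h)) t)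
    (hWM : ∀ k ≤ m + 2, ∀ t ∈ Icc a (a + h), |W k t| ≤ M) :
    |∫ t in a..a + h, g t * (W 0 t - (interpEqui a h m (W 0)).eval t)|
      ≤ ((lebesgueConst m + 1) * Cg + L) * M * h ^ (m + 3) := by
  have haI : a ∈ Icc a (a + h) := left_mem_Icc.mpr (by linarith)
  have hM : 0 ≤ M := (abs_nonneg _).trans (hWM 0 (by omega) a haI)
  have hCg : 0 ≤ Cg := (abs_nonneg _).trans (hg a haI)
  set q := chainTaylor W a (m + 2)
  set R := fun u => W 0 u - q.eval u
  set Φ := nodalEqui a h m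
  have hR : ∀ t ∈ Icc a (a + h), |R t| ≤ M * h ^ (m + 2) := fun t ht =>
    abs_sub_eval_chainTaylor_le_pow hM (m + 2) hW (hWM (m + 2) le_rfl) ht
  have hc : |q.coeff (m + 1)| ≤ M :=
    abs_coeff_chainTaylor_le W a (m + 1) (hWM (m + 1) (by omega) a haI)
  have hW₀ : ContinuousOn (W 0) (Icc a (a + h)) := fun t ht =>
    (hW 0 (by omega) t ht).continuousWithinAt
  have hRc : ContinuousOn R (Icc a (a + h)) := hW₀.sub (Polynomial.continuous q).continuousOn
  have hint₁ : IntervalIntegrable (fun t => g t * (R t - (interpEqui a h m R).eval t)) volume a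
      (a + h) :=
    (hgc.mul (hRc.sub (Polynomial.continuous _).continuousOn)).intervalIntegrable_of_Icc
      (by linarith)
  have hint₂ : IntervalIntegrable (fun t => g t * Φ.eval t) volume a (a + h) :=
    (hgc.mul (Polynomial.continuous _).continuousOn).intervalIntegrable_of_Icc (by linarith)
  have hsplit : ∫ t in a..a + h, g t * (W 0 t - (interpEqui a h m (W 0)).eval t)
      = (∫ t in a..a + h, g t * (R t - (interpEqui a h m R).eval t))
        + q.coeff (m + 1) * ∫ t in a..a + h, g t * Φ.eval t := by
    rw [← intervalIntegral.integral_const_mul, ← intervalIntegral.integral_add hint₁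
      (hint₂.const_mul _)]
    refine intervalIntegral.integral_congr fun t _ => ?_
    simp only [sub_eval_interpEqui_eq hh hm (W 0) (natDegree_chainTaylor_le W a (m + 1)) t]
    ring
  rw [hsplit]
  calc _ ≤ |∫ t in a..a + h, g t * (R t - (interpEqui a h m R).eval t)|
        + |q.coeff (m + 1)| * |∫ t in a..a + h, g t * Φ.eval t| :=
        (abs_add_le _ _).trans_eq (by rw [abs_mul])
    _ ≤ Cg * (M * h ^ (m + 2) + lebesgueConst m * (M * h ^ (m + 2))) * (a + h - a)
        + M * (L * h ^ (m + 3)) := by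
        refine add_le_add (abs_intervalIntegral_le_of_forall_mem_Icc (by linarith) fun t ht => ?_)
          (mul_le_mul hc (abs_integral_mul_eval_nodalEqui_le hh.le hm he hgc hgL) (abs_nonneg _) hM)
        rw [abs_mul]
        exact mul_le_mul (hg t ht) ((abs_sub _ _).trans
          (add_le_add (hR t ht) (abs_eval_interpEqui_le hh hm ht hR))) (abs_nonneg _) hCg
    _ = ((lebesgueConst m + 1) * Cg + L) * M * h ^ (m + 3) := by ring

end LocalEstimate

section Projection

variable {n r : ℕ}

lemma natCast_succ_div (n k : ℕ) : ((k + 1 : ℕ) : ℝ) / n = k / n + 1 / n := by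
  rw [Nat.cast_succ, add_div]

lemma div_le_div_add_one_div (n k : ℕ) : (k : ℝ) / n ≤ k / n + 1 / n :=
  le_add_of_nonneg_right (by positivity)

lemma Icc_div_add_one_div_subset {k : ℕ} (hk : k < n) :
    Icc ((k : ℝ) / n) (k / n + 1 / n) ⊆ Icc 0 1 := by
  have hn : (0 : ℝ) < n := by exact_mod_cast k.zero_le.trans_lt hk
  have hk' : (k : ℝ) + 1 ≤ n := by exact_mod_cast hk
  refine Icc_subset_Icc (by positivity) ?_
  rw [← add_div, div_le_one hn]
  exact hk'

lemma Qn_eqOn_Ico {k : ℕ} (hk : k < n) (w : ℝ → ℝ) :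
    EqOn (Qn n r w) (fun t => (interpEqui (k / n) (1 / n) (2 * r) w).eval t)
      (Ico ((k : ℝ) / n) (k / n + 1 / n)) := by
  intro t ht
  have hn : (0 : ℝ) < n := by exact_mod_cast k.zero_le.trans_lt hk
  have hfloor : ⌊t * n⌋₊ = k := by
    rw [Nat.floor_eq_iff (mul_nonneg ((by positivity : (0 : ℝ) ≤ k / n).trans ht.1) hn.le)]
    constructor
    · exact (div_le_iff₀ hn).mp ht.1
    · exact (lt_div_iff₀ hn).mp (by rw [add_div]; exact ht.2)
  have hj : min n (k + 1) = k + 1 := min_eq_right hk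
  simp only [Qn, hfloor, hj, interpPoly_eq_interpEqui, Nat.cast_succ, add_sub_cancel_right]

lemma intervalIntegrable_Qn_div {k : ℕ} (hk : k < n) (w : ℝ → ℝ) :
    IntervalIntegrable (Qn n r w) volume ((k : ℝ) / n) (k / n + 1 / n) := by
  refine ((Polynomial.continuous (interpEqui (k / n) (1 / n) (2 * r) w)).intervalIntegrable
    _ _).congr_uIoo ?_
  rw [uIoo_of_le (div_le_div_add_one_div n k)]
  exact ((Qn_eqOn_Ico hk w).mono Ioo_subset_Ico_self).symm

lemma intervalIntegrable_Qn (hn : 0 < n) (w : ℝ → ℝ) :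
    IntervalIntegrable (Qn n r w) volume 0 1 := by
  have := IntervalIntegrable.trans_iterate (a := fun k : ℕ => (k : ℝ) / n) (n := n) fun k hk => by
    simpa only [natCast_succ_div] using intervalIntegrable_Qn_div (r := r) hk w
  have hn' : (n : ℝ) ≠ 0 := by positivity
  simpa [div_self hn'] using this

lemma abs_integral_mul_sub_Qn_le_of_lt {k : ℕ} (hk : k < n) (hr : 0 < r) {g : ℝ → ℝ} {Cg L : ℝ}
    (hgc : ContinuousOn g (Icc 0 1)) (hg : ∀ t ∈ Icc (0 : ℝ) 1, |g t| ≤ Cg)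
    (hgL : ∀ t ∈ Icc (0 : ℝ) 1, ∀ t' ∈ Icc (0 : ℝ) 1, |g t - g t'| ≤ L * |t - t'|)
    {W : ℕ → ℝ → ℝ} {M : ℝ}
    (hW : ∀ k < 2 * r + 2, ∀ t ∈ Icc (0 : ℝ) 1, HasDerivWithinAt (W k) (W (k + 1) t) (Icc 0 1) t)
    (hWM : ∀ k ≤ 2 * r + 2, ∀ t ∈ Icc (0 : ℝ) 1, |W k t| ≤ M) :
    |∫ t in (k : ℝ) / n..k / n + 1 / n, g t * (W 0 t - Qn n r (W 0) t)|
      ≤ ((lebesgueConst (2 * r) + 1) * Cg + L) * M * (1 / n) ^ (2 * r + 3) := by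
  have hn : (0 : ℝ) < n := by exact_mod_cast k.zero_le.trans_lt hk
  have hL : 0 ≤ L := by
    simpa using (abs_nonneg _).trans (hgL 1 (right_mem_Icc.mpr zero_le_one) 0
      (left_mem_Icc.mpr zero_le_one))
  have hsub := Icc_div_add_one_div_subset hk
  have ha : (k : ℝ) / n ∈ Icc ((k : ℝ) / n) (k / n + 1 / n) :=
    left_mem_Icc.mpr (div_le_div_add_one_div n k)
  rw [intervalIntegral.integral_congr_Ioo_of_le (g := fun t =>
      g t * (W 0 t - (interpEqui (k / n) (1 / n) (2 * r) (W 0)).eval t))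
    (div_le_div_add_one_div n k) fun t ht => by rw [Qn_eqOn_Ico hk _ (Ioo_subset_Ico_self ht)]]
  exact abs_integral_mul_sub_interpEqui_le (by positivity) (by omega) (even_two_mul r)
    (hgc.mono hsub) (fun t ht => hg t (hsub ht))
    (fun t ht => (hgL t (hsub ht) _ (hsub ha)).trans
      (mul_le_mul_of_nonneg_left (abs_sub_le_of_mem_Icc ht ha) hL))
    (fun k hk t ht => (hW k hk t (hsub ht)).mono hsub) (fun k hk t ht => hWM k hk t (hsub ht))

lemma abs_integral_mul_sub_Qn_le (hn : 0 < n) (hr : 0 < r) {g : ℝ → ℝ} {Cg L : ℝ}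
    (hgc : ContinuousOn g (Icc 0 1)) (hg : ∀ t ∈ Icc (0 : ℝ) 1, |g t| ≤ Cg)
    (hgL : ∀ t ∈ Icc (0 : ℝ) 1, ∀ t' ∈ Icc (0 : ℝ) 1, |g t - g t'| ≤ L * |t - t'|)
    {W : ℕ → ℝ → ℝ} {M : ℝ}
    (hW : ∀ k < 2 * r + 2, ∀ t ∈ Icc (0 : ℝ) 1, HasDerivWithinAt (W k) (W (k + 1) t) (Icc 0 1) t)
    (hWM : ∀ k ≤ 2 * r + 2, ∀ t ∈ Icc (0 : ℝ) 1, |W k t| ≤ M) :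
    |∫ t in (0 : ℝ)..1, g t * (W 0 t - Qn n r (W 0) t)|
      ≤ ((lebesgueConst (2 * r) + 1) * Cg + L) * M * (1 / n) ^ (2 * r + 2) := by
  have hn' : (n : ℝ) ≠ 0 := by positivity
  have hW₀ : ContinuousOn (W 0) (Icc 0 1) := fun t ht => (hW 0 (by omega) t ht).continuousWithinAt
  have hint : ∀ k < n, IntervalIntegrable (fun t => g t * (W 0 t - Qn n r (W 0) t)) volume
      ((k : ℝ) / n) ((k + 1 : ℕ) / n) := fun k hk => by
    have hsub := Icc_div_add_one_div_subset hk
    rw [natCast_succ_div]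
    refine (((hW₀.mono hsub).intervalIntegrable_of_Icc (div_le_div_add_one_div n k)).sub
      (intervalIntegrable_Qn_div hk _)).continuousOn_mul ?_
    rw [uIcc_of_le (div_le_div_add_one_div n k)]
    exact hgc.mono hsub
  have hsum := intervalIntegral.sum_integral_adjacent_intervals hint
  simp only [Nat.cast_zero, zero_div, div_self hn'] at hsum
  rw [← hsum]
  calc _ ≤ ∑ k ∈ Finset.range n, |∫ t in (k : ℝ) / n..((k + 1 : ℕ) : ℝ) / n,
          g t * (W 0 t - Qn n r (W 0) t)| := Finset.abs_sum_le_sum_abs _ _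
    _ ≤ ∑ _k ∈ Finset.range n,
          ((lebesgueConst (2 * r) + 1) * Cg + L) * M * (1 / n) ^ (2 * r + 3) :=
        Finset.sum_le_sum fun k hk => by
          rw [natCast_succ_div]
          exact abs_integral_mul_sub_Qn_le_of_lt (Finset.mem_range.mp hk) hr hgc hg hgL hW hWM
    _ = ((lebesgueConst (2 * r) + 1) * Cg + L) * M * (1 / n) ^ (2 * r + 2) := by
        rw [Finset.sum_const, Finset.card_range, nsmul_eq_mul, pow_succ]
        field_simp

end Projection

lemma supNorm_le {f : ℝ → ℝ} {B : ℝ} (hB : ∀ t ∈ Icc (0 : ℝ) 1, |f t| ≤ B) : supNorm f ≤ B :=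
  haveI : Nonempty (Icc (0 : ℝ) 1) := ⟨⟨0, left_mem_Icc.mpr zero_le_one⟩⟩
  ciSup_le fun t => hB t.1 t.2

lemma abs_le_supNorm {f : ℝ → ℝ} (hf : ContinuousOn f (Icc 0 1)) {t : ℝ}
    (ht : t ∈ Icc (0 : ℝ) 1) : |f t| ≤ supNorm f :=
  le_ciSup (f := fun u : Icc (0 : ℝ) 1 => |f u.1|)
    (by simpa only [image_eq_range] using isCompact_Icc.bddAbove_image hf.abs) ⟨t, ht⟩

lemma abs_sub_sub_mul_le_of_hasDerivWithinAt {f f' : ℝ → ℝ} {S : Set ℝ} (hS : Convex ℝ S)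
    (hf : ∀ u ∈ S, HasDerivWithinAt f (f' u) S u) {s s' ε : ℝ} (hs : s ∈ S) (hs' : s' ∈ S)
    (hε : ∀ u ∈ S, |f' u - f' s| ≤ ε) : |f s' - f s - (s' - s) * f' s| ≤ ε * |s' - s| := by
  have := hS.norm_image_sub_le_of_norm_hasDerivWithin_le (f := fun u => f u - u * f' s)
    (fun u hu => (hf u hu).sub (hasDerivAt_mul_const (f' s)).hasDerivWithinAt) hε hs hs'
  simp only [Real.norm_eq_abs] at this
  convert this using 2
  ring

lemma hasDerivWithinAt_integral_mul {k k' : ℝ → ℝ → ℝ} {w : ℝ → ℝ}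
    (hk : ∀ t ∈ Icc (0 : ℝ) 1, ∀ s ∈ Icc (0 : ℝ) 1,
      HasDerivWithinAt (fun u => k u t) (k' s t) (Icc 0 1) s)
    (hkc : ∀ s ∈ Icc (0 : ℝ) 1, ContinuousOn (k s) (Icc 0 1))
    (hk'c : ContinuousOn (fun q : ℝ × ℝ => k' q.1 q.2) (Icc 0 1 ×ˢ Icc 0 1))
    (hw : IntervalIntegrable w volume 0 1) {s : ℝ} (hs : s ∈ Icc (0 : ℝ) 1) :
    HasDerivWithinAt (fun u => ∫ t in (0 : ℝ)..1, k u t * w t)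
      (∫ t in (0 : ℝ)..1, k' s t * w t) (Icc 0 1) s := by
  have hint : ∀ {f : ℝ → ℝ}, ContinuousOn f (Icc 0 1) →
      IntervalIntegrable (fun t => f t * w t) volume 0 1 := fun hf =>
    hw.continuousOn_mul (by rwa [uIcc_of_le zero_le_one])
  have hk's : ContinuousOn (k' s) (Icc 0 1) :=
    hk'c.comp (continuous_const.prodMk continuous_id).continuousOn fun t ht => ⟨hs, ht⟩
  set I := ∫ t in (0 : ℝ)..1, |w t|
  have hI : 0 ≤ I := intervalIntegral.integral_nonneg zero_le_one fun _ _ => abs_nonneg _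
  rw [hasDerivWithinAt_iff_isLittleO, Asymptotics.isLittleO_iff]
  intro c hc
  set ε := c / (I + 1)
  obtain ⟨δ, hδ, hk'δ⟩ := Metric.uniformContinuousOn_iff.mp
    ((isCompact_Icc.prod isCompact_Icc).uniformContinuousOn_of_continuous hk'c) ε (by positivity)
  filter_upwards [inter_mem_nhdsWithin (Icc 0 1) (Metric.ball_mem_nhds s hδ)] with s' hs'
  have hlin : ∀ t ∈ Icc (0 : ℝ) 1, |k s' t - k s t - (s' - s) * k' s t| ≤ ε * |s' - s| :=
    fun t ht => abs_sub_sub_mul_le_of_hasDerivWithinAt ((convex_Icc 0 1).inter (convex_ball s δ))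
      (fun u hu => (hk t ht u hu.1).mono inter_subset_left) ⟨hs, Metric.mem_ball_self hδ⟩ hs'
      fun u hu => (hk'δ (u, t) ⟨hu.1, ht⟩ (s, t) ⟨hs, ht⟩ (by
        simpa [Prod.dist_eq] using Metric.mem_ball.mp hu.2)).le
  have hsplit : (∫ t in (0 : ℝ)..1, k s' t * w t) - (∫ t in (0 : ℝ)..1, k s t * w t)
      - (s' - s) • ∫ t in (0 : ℝ)..1, k' s t * w t
      = ∫ t in (0 : ℝ)..1, (k s' t - k s t - (s' - s) * k' s t) * w t := by
    rw [← intervalIntegral.integral_sub (hint (hkc s' hs'.1)) (hint (hkc s hs)), smul_eq_mul,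
      ← intervalIntegral.integral_const_mul, ← intervalIntegral.integral_sub
      ((hint (hkc s' hs'.1)).sub (hint (hkc s hs))) ((hint hk's).const_mul _)]
    congr 1
    ext t
    ring
  rw [hsplit]
  calc ‖∫ t in (0 : ℝ)..1, (k s' t - k s t - (s' - s) * k' s t) * w t‖
      ≤ ∫ t in (0 : ℝ)..1, ε * |s' - s| * |w t| :=
        intervalIntegral.norm_integral_le_of_norm_le zero_le_one (ae_of_all _ fun t ht => by
          rw [Real.norm_eq_abs, abs_mul]
          exact mul_le_mul_of_nonneg_right (hlin t (Ioc_subset_Icc_self ht)) (abs_nonneg _))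
          (hw.abs.const_mul _)
    _ = ε * I * ‖s' - s‖ := by rw [intervalIntegral.integral_const_mul, Real.norm_eq_abs]; ring
    _ ≤ c * ‖s' - s‖ := by
        gcongr
        rw [div_mul_eq_mul_div, div_le_iff₀ (by positivity)]
        nlinarith

/-- `κd α β` plays the role of `D^{(α,β)}κ = ∂^{α+β}κ/∂s^α∂t^β` for `α + β ≤ N`. -/
structure IsKernelDerivFamily (κd : ℕ → ℕ → ℝ → ℝ → ℝ) (N : ℕ) (C : ℝ) : Prop where
  hasDerivWithinAt_fst : ∀ α β : ℕ, α + β + 1 ≤ N → ∀ t ∈ Icc (0 : ℝ) 1, ∀ s ∈ Icc (0 : ℝ) 1,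
    HasDerivWithinAt (fun u => κd α β u t) (κd (α + 1) β s t) (Icc 0 1) s
  hasDerivWithinAt_snd : ∀ α β : ℕ, α + β + 1 ≤ N → ∀ s ∈ Icc (0 : ℝ) 1, ∀ t ∈ Icc (0 : ℝ) 1,
    HasDerivWithinAt (fun u => κd α β s u) (κd α (β + 1) s t) (Icc 0 1) t
  continuousOn : ∀ α β : ℕ, α + β ≤ N →
    ContinuousOn (fun q : ℝ × ℝ => κd α β q.1 q.2) (Icc 0 1 ×ˢ Icc 0 1)
  abs_le : ∀ α β : ℕ, α + β ≤ N → ∀ s ∈ Icc (0 : ℝ) 1, ∀ t ∈ Icc (0 : ℝ) 1, |κd α β s t| ≤ C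

/-- For `κd k 0 = ∂ₛᵏκ`, the `k`-th derivative of `s ↦ ∫₀¹ κ(s, t) w(t) dt`. -/
noncomputable def kernelMoment (κd : ℕ → ℕ → ℝ → ℝ → ℝ) (w : ℝ → ℝ) (k : ℕ) (s : ℝ) : ℝ :=
  ∫ t in (0 : ℝ)..1, κd k 0 s t * w t

namespace IsKernelDerivFamily

variable {κd : ℕ → ℕ → ℝ → ℝ → ℝ} {N : ℕ} {C : ℝ}

lemma continuousOn_slice (hκ : IsKernelDerivFamily κd N C) {α β : ℕ} (hαβ : α + β ≤ N) {s : ℝ}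
    (hs : s ∈ Icc (0 : ℝ) 1) :
    ContinuousOn (κd α β s) (Icc 0 1) :=
  (hκ.continuousOn α β hαβ).comp (continuous_const.prodMk continuous_id).continuousOn
    fun _ ht => ⟨hs, ht⟩

lemma abs_sub_le (hκ : IsKernelDerivFamily κd N C) {k : ℕ} (hk : k + 1 ≤ N) {s : ℝ}
    (hs : s ∈ Icc (0 : ℝ) 1) :
    ∀ t ∈ Icc (0 : ℝ) 1, ∀ t' ∈ Icc (0 : ℝ) 1, |κd k 0 s t - κd k 0 s t'| ≤ C * |t - t'| :=
  fun _ ht _ ht' => (convex_Icc 0 1).norm_image_sub_le_of_norm_hasDerivWithin_le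
    (hκ.hasDerivWithinAt_snd k 0 hk s hs) (hκ.abs_le k 1 hk s hs) ht' ht

lemma hasDerivWithinAt_kernelMoment (hκ : IsKernelDerivFamily κd N C) {k : ℕ} (hk : k + 1 ≤ N)
    {w : ℝ → ℝ} (hw : IntervalIntegrable w volume 0 1) {s : ℝ} (hs : s ∈ Icc (0 : ℝ) 1) :
    HasDerivWithinAt (kernelMoment κd w k) (kernelMoment κd w (k + 1) s) (Icc 0 1) s :=
  hasDerivWithinAt_integral_mul (hκ.hasDerivWithinAt_fst k 0 hk)
    (fun _ hs => hκ.continuousOn_slice (by omega) hs) (hκ.continuousOn (k + 1) 0 hk) hw hs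

lemma abs_kernelMoment_le (hκ : IsKernelDerivFamily κd N C) {k : ℕ} (hk : k ≤ N) {w : ℝ → ℝ}
    {B : ℝ} (hw : ∀ t ∈ Icc (0 : ℝ) 1, |w t| ≤ B) {s : ℝ} (hs : s ∈ Icc (0 : ℝ) 1) :
    |kernelMoment κd w k s| ≤ C * B := by
  simpa [kernelMoment] using abs_intervalIntegral_le_of_forall_mem_Icc zero_le_one fun t ht => by
    rw [abs_mul]
    exact mul_le_mul (hκ.abs_le k 0 (by omega) s hs t ht) (hw t ht) (abs_nonneg _)
      ((abs_nonneg _).trans (hκ.abs_le k 0 (by omega) s hs t ht))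

lemma abs_kernelMoment_sub_Qn_le {n r : ℕ}
    (hκ : IsKernelDerivFamily κd (2 * r + 3) C)
    (hn : 0 < n) (hr : 0 < r) {W : ℕ → ℝ → ℝ} {M : ℝ}
    (hW : ∀ k < 2 * r + 2, ∀ t ∈ Icc (0 : ℝ) 1, HasDerivWithinAt (W k) (W (k + 1) t) (Icc 0 1) t)
    (hWM : ∀ k ≤ 2 * r + 2, ∀ t ∈ Icc (0 : ℝ) 1, |W k t| ≤ M) {k : ℕ} (hk : k ≤ 2 * r + 2)
    {s : ℝ} (hs : s ∈ Icc (0 : ℝ) 1) :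
    |kernelMoment κd (fun t => W 0 t - Qn n r (W 0) t) k s|
      ≤ ((lebesgueConst (2 * r) + 1) * C + C) * M * (1 / n) ^ (2 * r + 2) :=
  abs_integral_mul_sub_Qn_le hn hr (hκ.continuousOn_slice (by omega) hs)
    (hκ.abs_le k 0 (by omega) s hs) (hκ.abs_sub_le (by omega) hs) hW hWM

end IsKernelDerivFamily

/-- Lemma 5, second estimate: with `x := Kψ` and `z := K(x − Q_n x)`, `‖K(z − Q_n z)‖_∞ ≤ C ‖ψ‖_∞ h^{4r+4}` with `C` independent of `n`. -/
theorem stmt_17 (r : ℕ) (hr : 1 ≤ r)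
    (κ : ℝ → ℝ → ℝ) (κd : ℕ → ℕ → ℝ → ℝ → ℝ) (C₂ : ℝ) (hC₂ : 0 < C₂)
    (hκ0 : κd 0 0 = κ)
    (hds : ∀ α β : ℕ, α + β + 1 ≤ 2 * r + 3 → ∀ t ∈ Set.Icc (0:ℝ) 1, ∀ s ∈ Set.Icc (0:ℝ) 1,
      HasDerivWithinAt (fun u => κd α β u t) (κd (α + 1) β s t) (Set.Icc 0 1) s)
    (hdt : ∀ α β : ℕ, α + β + 1 ≤ 2 * r + 3 → ∀ s ∈ Set.Icc (0:ℝ) 1, ∀ t ∈ Set.Icc (0:ℝ) 1,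
      HasDerivWithinAt (fun u => κd α β s u) (κd α (β + 1) s t) (Set.Icc 0 1) t)
    (hcont : ∀ α β : ℕ, α + β ≤ 2 * r + 3 →
      ContinuousOn (fun q : ℝ × ℝ => κd α β q.1 q.2) (Set.Icc 0 1 ×ˢ Set.Icc 0 1))
    (hbd : ∀ α β : ℕ, α + β ≤ 2 * r + 3 →
      ∀ s ∈ Set.Icc (0:ℝ) 1, ∀ t ∈ Set.Icc (0:ℝ) 1, |κd α β s t| ≤ C₂)
    :
    ∃ C : ℝ, 0 < C ∧
      ∀ n : ℕ, 1 ≤ n → ∀ ψ : ℝ → ℝ, ContinuousOn ψ (Set.Icc 0 1) →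
        supNorm (Kop κ (fun t =>
            Kop κ (fun u => Kop κ ψ u - Qn n r (Kop κ ψ) u) t -
              Qn n r (Kop κ (fun u => Kop κ ψ u - Qn n r (Kop κ ψ) u)) t)) ≤
          C * supNorm ψ * ((1 : ℝ) / n) ^ (4 * r + 4) := by
  have hκ : IsKernelDerivFamily κd (2 * r + 3) C₂ := ⟨hds, hdt, hcont, hbd⟩
  have hK : ∀ w, kernelMoment κd w 0 = Kop κ w := fun w => by subst hκ0; rfl
  set A := (lebesgueConst (2 * r) + 1) * C₂ + C₂
  have hA : 0 < A := by have := lebesgueConst_nonneg (2 * r); positivity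
  refine ⟨A ^ 2 * C₂, by positivity, fun n hn ψ hψ => ?_⟩
  simp only [← hK]
  set X := kernelMoment κd ψ
  have hX : ∀ k < 2 * r + 2, ∀ s ∈ Icc (0 : ℝ) 1,
      HasDerivWithinAt (X k) (X (k + 1) s) (Icc 0 1) s :=
    fun k hk s hs => hκ.hasDerivWithinAt_kernelMoment (by omega)
      (hψ.intervalIntegrable_of_Icc zero_le_one) hs
  have hXM : ∀ k ≤ 2 * r + 2, ∀ s ∈ Icc (0 : ℝ) 1, |X k s| ≤ C₂ * supNorm ψ :=
    fun k hk s hs => hκ.abs_kernelMoment_le (by omega) (fun t ht => abs_le_supNorm hψ ht) hs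
  have hX₀ : ContinuousOn (X 0) (Icc 0 1) := fun t ht => (hX 0 (by omega) t ht).continuousWithinAt
  set Z := kernelMoment κd (fun t => X 0 t - Qn n r (X 0) t)
  have hZ : ∀ k < 2 * r + 2, ∀ s ∈ Icc (0 : ℝ) 1,
      HasDerivWithinAt (Z k) (Z (k + 1) s) (Icc 0 1) s :=
    fun k hk s hs => hκ.hasDerivWithinAt_kernelMoment (by omega)
      ((hX₀.intervalIntegrable_of_Icc zero_le_one).sub (intervalIntegrable_Qn hn _)) hs
  have hZM : ∀ k ≤ 2 * r + 2, ∀ s ∈ Icc (0 : ℝ) 1,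
      |Z k s| ≤ A * (C₂ * supNorm ψ) * (1 / n) ^ (2 * r + 2) :=
    fun k hk s hs => hκ.abs_kernelMoment_sub_Qn_le hn hr hX hXM hk hs
  refine (supNorm_le fun s hs =>
    hκ.abs_kernelMoment_sub_Qn_le hn hr hZ hZM (Nat.zero_le _) hs).trans_eq ?_
  ring
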